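/- Fix n ≥ 1. Let F be a maximal intersecting subfamily of P([n]) and let A ∈ F be a minimal set of F (i.e., no proper subset of A belongs to F) such that {|A|, n − |A|} ≠ {⌊n/2⌋, ⌈n/2⌉}. Define G = ({B ⊆ [n+1] : B ∩ [n] ∈ F} \ {A}) ∪ {[n+1]\A}. Then G is a maximal intersecting subfamily of P([n+1]) that is not ∅-minimal. -/

import Mathlib

open Finset

variable {m : ℕ}

/-- A family of finsets is intersecting if any two members meet. -/
def IsIntersecting (F : Finset (Finset (Fin m))) : Prop :=
  ∀ A ∈ F, ∀ B ∈ F, (A ∩ B).Nonempty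

/-- A maximal intersecting subfamily of the power set of `Fin m`. -/
def IsMaxIntersecting (F : Finset (Finset (Fin m))) : Prop :=
  IsIntersecting F ∧ ∀ G : Finset (Finset (Fin m)), IsIntersecting G → F ⊆ G → G ⊆ F

/-- A family is subset-closed if it contains all subsets of its members. -/
def IsSubsetClosed (F : Finset (Finset (Fin m))) : Prop :=
  ∀ A ∈ F, ∀ B ⊆ A, B ∈ F

/-- The embedding of a family into `ℝ^{P([m])}`. -/
def famVec (F : Finset (Finset (Fin m))) : Finset (Fin m) → ℝ := fun A =>
  if A ∈ F ∧ Aᶜ ∉ F then 1 else if A ∉ F ∧ Aᶜ ∈ F then -1 else 0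

/-- The standard basis vector `e_A` of `ℝ^{P([m])}`. -/
def stdBasis (A : Finset (Fin m)) : Finset (Fin m) → ℝ := fun B => if B = A then 1 else 0

/-- The star of a family centered at `a`. -/
def starFam (a : Fin m) (F : Finset (Finset (Fin m))) : Finset (Finset (Fin m)) :=
  F.filter fun A => a ∈ A

/-- The setwise complement (dual) `F* = {Aᶜ : A ∈ F}`. -/
def dualFam (F : Finset (Finset (Fin m))) : Finset (Finset (Fin m)) :=
  F.image fun A => Aᶜ

/-- `Tpath σ C k = C △ {σ(1), …, σ(k)}` (0-indexed: the images of the first `k` indices). -/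
def Tpath (σ : Equiv.Perm (Fin m)) (C : Finset (Fin m)) (k : ℕ) : Finset (Fin m) :=
  symmDiff C ((Finset.univ.filter fun i : Fin m => (i : ℕ) < k).image σ)

/-- The path-sum `Λ(H)` as a vector in `ℝ^{P([m]) × P([m])}`: at coordinate `(X, Y)` it is the
number of triples `(σ, C, k)` whose `k`-th path step goes from `X` to `Y`, minus the number of
triples whose `k`-th step goes from `Y` to `X`. -/
def LamW (H : Finset (Finset (Fin m))) (X Y : Finset (Fin m)) : ℝ :=
  ∑ σ : Equiv.Perm (Fin m), ∑ C ∈ H, ∑ k ∈ Finset.Icc 1 m,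
    ((if Tpath σ C (k - 1) = X ∧ Tpath σ C k = Y then (1 : ℝ) else 0)
      - (if Tpath σ C (k - 1) = Y ∧ Tpath σ C k = X then (1 : ℝ) else 0))

/-- A maximal intersecting family `F` is `∅`-minimal if for every `a`, the coordinate
`Λ(F*)_{(∅,{a})}` is the minimum of `Λ(F*)_{(A, A ∪ {a})}` over all `A ⊆ [m] \ {a}`. -/
def EmptyMinimal (F : Finset (Finset (Fin m))) : Prop :=
  ∀ a : Fin m, ∀ A : Finset (Fin m), a ∉ A →
    LamW (dualFam F) ∅ {a} ≤ LamW (dualFam F) A (insert a A)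

/-- The copy of `[n]` inside `Fin (n+1)`. -/
def groundN (n : ℕ) : Finset (Fin (n + 1)) := Finset.univ.filter fun x => (x : ℕ) < n

/-- The family `G = ({B ⊆ [n+1] : B ∩ [n] ∈ F} \ {A}) ∪ {[n+1] \ A}`. -/
def gFam (n : ℕ) (F : Finset (Finset (Fin (n + 1)))) (A : Finset (Fin (n + 1))) :
    Finset (Finset (Fin (n + 1))) :=
  ((Finset.univ.filter fun B : Finset (Fin (n + 1)) => B ∩ groundN n ∈ F).erase A) ∪ {Aᶜ}

/-!
`G` is intersecting because `A` is a minimal member of `F` (a set of `G` missing `[n+1] \ A` would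
lie inside `A`), and it is maximal because it contains one set of every complementary pair.

For the second claim, `Λ(H)_{(Y, Y △ {a})}` only sees the step of a path at which `a` is toggled,
so it equals `∑_σ ([Y △ P_σ ∈ H] - [Y △ {a} △ P_σ ∈ H])`, where `P_σ` is the set of elements
preceding `a` in the order `σ`. For `H = G*`, `a = n + 1` and `D ⊆ [n]` the summand is
`[P_σ = D △ A] + [P_σ = D △ ([n] \ A)]`, and since exactly `j! (n - j)!` orders have a given
`j`-set as `P_σ`, `Λ(G*)_{(D, D ∪ {a})} = 2 j! (n - j)!` with `j = |D △ A|`. This is strictly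
smaller for `|D △ A| = ⌊n/2⌋` than for `D = ∅`, where `j = |A|`.
-/

open Equiv Nat
open scoped symmDiff

theorem card_perm_comp_eq {α ι : Type*} [Fintype α] [DecidableEq α] [Fintype ι] [DecidableEq ι]
    (c p : α → ι) (h : ∀ i, Fintype.card {x // p x = i} = Fintype.card {x // c x = i}) :
    Fintype.card {σ : Perm α // c ∘ σ = p} = ∏ i, (Fintype.card {x // p x = i})! := by
  obtain ⟨σ₀, rfl⟩ : ∃ σ₀ : Perm α, c ∘ σ₀ = p :=
    ⟨ofFiberEquiv fun i => Fintype.equivOfCardEq (h i), funext (ofFiberEquiv_map _)⟩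
  rw [← DomMulAct.stabilizer_card]
  refine Fintype.card_congr (subtypeEquiv (Equiv.mulLeft σ₀⁻¹) fun σ => ?_)
  have : (c ∘ σ₀) ∘ (σ₀⁻¹ * σ : Perm α) = c ∘ σ := by ext x; simp
  rw [Equiv.coe_mulLeft, this]

lemma factorial_mul_factorial_sub_succ_lt {n j : ℕ} (h : j + 1 < n - j) :
    (j + 1)! * (n - (j + 1))! < j ! * (n - j)! := by
  have hn : n - j = n - (j + 1) + 1 := by omega
  have key : (j + 1)! * (n - (j + 1))! * (n - j) = j ! * (n - j)! * (j + 1) := by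
    rw [hn, factorial_succ, factorial_succ (n - (j + 1))]
    ring
  refine Nat.lt_of_mul_lt_mul_right (a := j + 1) ?_
  rw [← key]
  exact Nat.mul_lt_mul_of_pos_left h (by positivity)

lemma factorial_mul_factorial_sub_half_lt {n k : ℕ} (hk : k ≤ n) (h₁ : k ≠ n / 2)
    (h₂ : k ≠ (n + 1) / 2) : (n / 2)! * ((n + 1) / 2)! < k ! * (n - k)! := by
  have anti : StrictAntiOn (fun j => j ! * (n - j)!) (Set.Iic (n / 2)) :=
    strictAntiOn_Iic_of_succ_lt fun j hj => by
      rw [Order.succ_eq_add_one]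
      exact factorial_mul_factorial_sub_succ_lt (by omega)
  rw [show (n + 1) / 2 = n - n / 2 by omega]
  rcases lt_or_gt_of_ne h₁ with hlt | hgt
  · exact anti (Set.mem_Iic.2 hlt.le) (Set.mem_Iic.2 le_rfl) hlt
  · have := anti (Set.mem_Iic.2 (by omega : n - k ≤ n / 2)) (Set.mem_Iic.2 le_rfl)
      (by omega : n - k < n / 2)
    simp only [Nat.sub_sub_self hk] at this
    rwa [mul_comm k !]

section Intersecting

variable {F : Finset (Finset (Fin m))}

lemma IsIntersecting.insert (hF : IsIntersecting F) {S : Finset (Fin m)} (hS : S.Nonempty)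
    (hSF : ∀ B ∈ F, (S ∩ B).Nonempty) : IsIntersecting (insert S F) := by
  intro X hX Y hY
  rw [mem_insert] at hX hY
  rcases hX with rfl | hX <;> rcases hY with rfl | hY
  · rwa [inter_self]
  · exact hSF Y hY
  · rw [inter_comm]; exact hSF X hX
  · exact hF X hX Y hY

lemma IsIntersecting.isMaxIntersecting (hF : IsIntersecting F) (h : ∀ B, B ∈ F ∨ Bᶜ ∈ F) :
    IsMaxIntersecting F :=
  ⟨hF, fun G hG hFG B hB =>
    (h B).resolve_right fun hc => by simpa using hG B hB Bᶜ (hFG hc)⟩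

lemma mem_or_sdiff_mem_of_maximal {U : Finset (Fin m)} (hFU : ∀ B ∈ F, B ⊆ U)
    (hFi : IsIntersecting F)
    (hFmax : ∀ G : Finset (Finset (Fin m)), (∀ B ∈ G, B ⊆ U) → IsIntersecting G → F ⊆ G → G ⊆ F)
    (hne : F.Nonempty) {S : Finset (Fin m)} (hS : S ⊆ U) : S ∈ F ∨ U \ S ∈ F := by
  have mem_of_meets : ∀ T ⊆ U, T.Nonempty → (∀ B ∈ F, (T ∩ B).Nonempty) → T ∈ F :=
    fun T hT hTne hTF => hFmax (insert T F) (forall_mem_insert _ _ _ |>.2 ⟨hT, hFU⟩)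
      (hFi.insert hTne hTF) (subset_insert _ _) (mem_insert_self _ _)
  by_cases hSF : ∀ B ∈ F, (S ∩ B).Nonempty
  · obtain ⟨B, hB⟩ := hne
    exact Or.inl (mem_of_meets S hS ((hSF B hB).mono inter_subset_left) hSF)
  · push Not at hSF
    obtain ⟨C, hC, hCS⟩ := hSF
    have hCU : C ⊆ U \ S := fun x hx => mem_sdiff.2
      ⟨hFU C hC hx, fun hxS => (not_nonempty_iff_eq_empty.2 hCS) ⟨x, mem_inter.2 ⟨hxS, hx⟩⟩⟩
    refine Or.inr (mem_of_meets _ sdiff_subset ?_ fun B hB => ?_)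
    · simpa using (hFi C hC C hC).mono (inter_subset_left.trans hCU)
    · exact (hFi C hC B hB).mono (inter_subset_inter_right hCU)

lemma mem_dualFam {B : Finset (Fin m)} : B ∈ dualFam F ↔ Bᶜ ∈ F := by
  simp [dualFam]

end Intersecting

section Trichotomy

variable {α : Type*} [DecidableEq α]

-- With `T = Iio k` and `a = k` this sorts positions into before / at / after `k`, and
-- `before σ a = T` says that `σ` carries that sorting to `trichotomy T a` (`before_eq_iff`).
def trichotomy (T : Finset α) (a x : α) : Ordering :=
  if x ∈ T then .lt else if x = a then .eq else .gt

lemma trichotomy_eq_lt_iff {T : Finset α} {a x : α} : trichotomy T a x = .lt ↔ x ∈ T := by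
  unfold trichotomy; split_ifs <;> simp_all

lemma trichotomy_eq_eq_iff {T : Finset α} {a x : α} :
    trichotomy T a x = .eq ↔ x ∉ T ∧ x = a := by
  unfold trichotomy; split_ifs <;> simp_all

lemma trichotomy_eq_gt_iff {T : Finset α} {a x : α} :
    trichotomy T a x = .gt ↔ x ∉ T ∧ x ≠ a := by
  unfold trichotomy; split_ifs <;> simp_all

lemma card_fiber_trichotomy [Fintype α] {T : Finset α} {a : α} (ha : a ∉ T) (i : Ordering) :
    Fintype.card {x // trichotomy T a x = i} =
      match i with
      | .lt => #T
      | .eq => 1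
      | .gt => Fintype.card α - (#T + 1) := by
  rw [Fintype.card_subtype]
  cases i
  · congr 1
    ext x
    simp [trichotomy_eq_lt_iff]
  · rw [← card_singleton a]
    congr 1
    ext x
    simp only [mem_filter, mem_univ, true_and, trichotomy_eq_eq_iff, mem_singleton]
    exact ⟨And.right, fun h => ⟨h ▸ ha, h⟩⟩
  · rw [← card_insert_of_notMem ha, ← card_compl]
    congr 1
    ext x
    simp [trichotomy_eq_gt_iff, and_comm]

end Trichotomy

def before (σ : Perm (Fin m)) (a : Fin m) : Finset (Fin m) := {x | σ.symm x < σ.symm a}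

lemma mem_before {σ : Perm (Fin m)} {a x : Fin m} : x ∈ before σ a ↔ σ.symm x < σ.symm a := by
  simp [before]

lemma notMem_before_self (σ : Perm (Fin m)) (a : Fin m) : a ∉ before σ a := by
  simp [mem_before]

lemma card_before (σ : Perm (Fin m)) (a : Fin m) : #(before σ a) = σ.symm a := by
  have : before σ a = (Iio (σ.symm a)).map σ.toEmbedding := by
    ext x; simp [mem_before]
  rw [this, card_map, Fin.card_Iio]

lemma before_eq_iff {σ : Perm (Fin m)} {a : Fin m} {T : Finset (Fin m)} {k : Fin m}
    (ha : a ∉ T) (hk : #T = k) :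
    before σ a = T ↔ trichotomy T a ∘ σ = trichotomy (Iio k) k := by
  constructor
  · rintro rfl
    obtain rfl : σ.symm a = k := Fin.ext (by rw [← hk, card_before])
    ext i
    simp [trichotomy, mem_before, ← Equiv.eq_symm_apply]
  · intro h
    have hak : σ.symm a = k := by
      have := congrFun h (σ.symm a)
      simp only [Function.comp_apply, apply_symm_apply] at this
      have h2 : trichotomy T a a = .eq := trichotomy_eq_eq_iff.mpr ⟨ha, rfl⟩
      rw [h2, eq_comm, trichotomy_eq_eq_iff] at this
      exact this.2
    ext x
    have := congrFun h (σ.symm x)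
    simp only [Function.comp_apply, apply_symm_apply] at this
    rw [mem_before, hak, ← mem_Iio, ← trichotomy_eq_lt_iff (a := k), ← this, trichotomy_eq_lt_iff]

theorem card_filter_before_eq {a : Fin m} {T : Finset (Fin m)} (ha : a ∉ T) :
    #{σ : Perm (Fin m) | before σ a = T} = (#T)! * (m - 1 - #T)! := by
  have hT : #T < m := by
    simpa using card_lt_univ_of_notMem ha
  set k : Fin m := ⟨#T, hT⟩
  have hk : #(Iio k) = #T := Fin.card_Iio k
  rw [← Fintype.card_subtype]
  simp_rw [before_eq_iff (k := k) ha rfl]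
  rw [card_perm_comp_eq]
  · rw [show (univ : Finset Ordering) = {.lt, .eq, .gt} from rfl]
    simp [card_fiber_trichotomy (notMem_Iio_self (b := k)), hk, Nat.sub_sub, Nat.add_comm 1]
  · intro i
    rw [card_fiber_trichotomy (notMem_Iio_self (b := k)), card_fiber_trichotomy ha, hk]

lemma mem_Tpath {σ : Perm (Fin m)} {C : Finset (Fin m)} {k : ℕ} {x : Fin m} :
    x ∈ Tpath σ C k ↔ (x ∈ C ↔ k ≤ σ.symm x) := by
  simp only [Tpath, mem_symmDiff, mem_image, mem_filter, mem_univ, true_and,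
    ← Equiv.eq_symm_apply, exists_eq_right]
  by_cases x ∈ C <;> simp_all

lemma Tpath_succ (σ : Perm (Fin m)) (C : Finset (Fin m)) (k : Fin m) :
    Tpath σ C (k + 1) = Tpath σ C k ∆ {σ k} := by
  ext x
  simp only [mem_symmDiff, mem_Tpath, mem_singleton, ← Equiv.symm_apply_eq, Fin.ext_iff]
  by_cases hx : x ∈ C <;> simp only [hx, true_iff, false_iff, not_le] <;> omega

lemma Tpath_symm_apply (σ : Perm (Fin m)) (C : Finset (Fin m)) (a : Fin m) :
    Tpath σ C (σ.symm a) = C ∆ before σ a := by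
  ext x
  simp only [mem_symmDiff, mem_Tpath, mem_before, Fin.lt_def]
  by_cases x ∈ C <;> simp_all

lemma Tpath_step_iff {σ : Perm (Fin m)} {C Y : Finset (Fin m)} {a : Fin m} {k : ℕ}
    (hk : k ∈ Icc 1 m) :
    (Tpath σ C (k - 1) = Y ∧ Tpath σ C k = Y ∆ {a}) ↔
      (k = σ.symm a + 1 ∧ C ∆ before σ a = Y) := by
  rw [mem_Icc] at hk
  obtain ⟨l, rfl⟩ : ∃ l : Fin m, k = l + 1 := ⟨⟨k - 1, by omega⟩, by simp only; omega⟩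
  rw [Tpath_succ, Nat.add_sub_cancel, Nat.add_right_cancel_iff, ← Fin.ext_iff]
  constructor
  · rintro ⟨rfl, h⟩
    rw [symmDiff_right_inj, singleton_inj, ← Equiv.eq_symm_apply] at h
    subst h
    exact ⟨rfl, (Tpath_symm_apply σ C a).symm⟩
  · rintro ⟨rfl, rfl⟩
    simp [Tpath_symm_apply]

lemma sum_Icc_Tpath_step (σ : Perm (Fin m)) (C : Finset (Fin m)) {Y Z : Finset (Fin m)} {a : Fin m}
    (hZ : Z = Y ∆ {a}) :
    ∑ k ∈ Icc 1 m, (if Tpath σ C (k - 1) = Y ∧ Tpath σ C k = Z then (1 : ℝ) else 0) =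
      if C = Y ∆ before σ a then 1 else 0 := by
  have hmem : (σ.symm a : ℕ) + 1 ∈ Icc 1 m := by simp
  subst hZ
  rw [sum_congr rfl fun k hk => if_congr (Tpath_step_iff hk) rfl rfl]
  simp_rw [ite_and]
  rw [sum_ite_eq', if_pos hmem]
  simp_rw [← symmDiff_left_inj (b := before σ a) (a := C), symmDiff_symmDiff_cancel_right]

lemma LamW_symmDiff_singleton (H : Finset (Finset (Fin m))) (Y : Finset (Fin m)) (a : Fin m) :
    LamW H Y (Y ∆ {a}) = ∑ σ : Perm (Fin m),
      ((if Y ∆ before σ a ∈ H then 1 else 0) - (if Y ∆ {a} ∆ before σ a ∈ H then 1 else 0)) := by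
  unfold LamW
  refine sum_congr rfl fun σ _ => ?_
  simp_rw [sum_sub_distrib, sum_Icc_Tpath_step σ _ rfl,
    sum_Icc_Tpath_step σ _ (symmDiff_symmDiff_cancel_right {a} Y).symm, sum_ite_eq']

lemma symmDiff_sdiff_eq_sdiff_symmDiff {α : Type*} [DecidableEq α] {U D A : Finset α}
    (hD : D ⊆ U) : D ∆ (U \ A) = U \ (D ∆ A) := by
  ext x
  have := @hD x
  simp only [mem_symmDiff, mem_sdiff] at this ⊢
  tauto

section GFam

variable {n : ℕ} {F : Finset (Finset (Fin (n + 1)))} {A : Finset (Fin (n + 1))}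

lemma groundN_eq_compl (n : ℕ) : groundN n = {Fin.last n}ᶜ := by
  ext x
  simp [groundN, Fin.ext_iff, Fin.val_last, Nat.lt_iff_le_and_ne, Nat.le_of_lt_succ x.isLt]

lemma card_groundN (n : ℕ) : #(groundN n) = n := by
  simp [groundN_eq_compl, card_compl]

lemma last_notMem_groundN (n : ℕ) : Fin.last n ∉ groundN n := by
  simp [groundN_eq_compl]

lemma mem_gFam {B : Finset (Fin (n + 1))} :
    B ∈ gFam n F A ↔ (B ∩ groundN n ∈ F ∧ B ≠ A) ∨ B = Aᶜ := by
  simp only [gFam, mem_union, mem_erase, mem_filter, mem_univ, true_and, mem_singleton]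
  tauto

lemma compl_inter_groundN (B : Finset (Fin (n + 1))) :
    Bᶜ ∩ groundN n = groundN n \ (B ∩ groundN n) := by
  ext x; simp only [mem_inter, mem_compl, mem_sdiff]; tauto

lemma isIntersecting_gFam (hFi : IsIntersecting F) (hAg : A ⊆ groundN n)
    (hAmin : ∀ B ⊂ A, B ∉ F) : IsIntersecting (gFam n F A) := by
  have meets_compl : ∀ B, B ∩ groundN n ∈ F → B ≠ A → (B ∩ Aᶜ).Nonempty := by
    intro B hB hBA
    by_contra h
    rw [not_nonempty_iff_eq_empty, ← sdiff_eq_inter_compl, sdiff_eq_empty_iff_subset] at h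
    rw [inter_eq_left.2 (h.trans hAg)] at hB
    exact hAmin B (ssubset_of_subset_of_ne h hBA) hB
  have hlast : Fin.last n ∈ Aᶜ := mem_compl.2 fun h => last_notMem_groundN n (hAg h)
  intro X hX Y hY
  rw [mem_gFam] at hX hY
  rcases hX with ⟨hX, hXA⟩ | rfl <;> rcases hY with ⟨hY, hYA⟩ | rfl
  · exact (hFi _ hX _ hY).mono (inter_subset_inter inter_subset_left inter_subset_left)
  · exact meets_compl X hX hXA
  · rw [inter_comm]; exact meets_compl Y hY hYA
  · exact ⟨_, mem_inter.2 ⟨hlast, hlast⟩⟩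

lemma mem_or_compl_mem_gFam (hF : ∀ S ⊆ groundN n, S ∈ F ∨ groundN n \ S ∈ F)
    (B : Finset (Fin (n + 1))) : B ∈ gFam n F A ∨ Bᶜ ∈ gFam n F A := by
  have of_inter_mem : ∀ B, B ∩ groundN n ∈ F → B ∈ gFam n F A ∨ Bᶜ ∈ gFam n F A := by
    intro B hB
    by_cases hBA : B = A
    · exact Or.inr (mem_gFam.2 (Or.inr (hBA ▸ rfl)))
    · exact Or.inl (mem_gFam.2 (Or.inl ⟨hB, hBA⟩))
  rcases hF _ inter_subset_right with h | h
  · exact of_inter_mem B h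
  · rw [← compl_inter_groundN] at h
    simpa [or_comm] using of_inter_mem Bᶜ h

variable {X : Finset (Fin (n + 1))}

lemma compl_mem_gFam_iff (hAg : A ⊆ groundN n) (hXg : X ⊆ groundN n) :
    Xᶜ ∈ gFam n F A ↔ groundN n \ X ∈ F ∨ X = A := by
  have hne : Xᶜ ≠ A := fun h =>
    last_notMem_groundN n (hAg (h ▸ mem_compl.2 fun h' => last_notMem_groundN n (hXg h')))
  rw [mem_gFam, compl_inter_groundN, inter_eq_left.2 hXg, compl_inj_iff]
  simp [hne]

lemma sdiff_mem_gFam_iff (hAg : A ⊆ groundN n) :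
    groundN n \ X ∈ gFam n F A ↔ groundN n \ X ∈ F ∧ groundN n \ X ≠ A := by
  have hne : groundN n \ X ≠ Aᶜ := fun h =>
    last_notMem_groundN n (mem_sdiff.1 (h ▸ mem_compl.2 fun h' => last_notMem_groundN n (hAg h'))).1
  rw [mem_gFam, inter_eq_left.2 sdiff_subset]
  simp [hne]

lemma compl_symmDiff_last (hXg : X ⊆ groundN n) : (X ∆ {Fin.last n})ᶜ = groundN n \ X := by
  ext x
  have := @hXg x
  simp only [mem_compl, mem_symmDiff, mem_singleton, mem_sdiff, groundN_eq_compl] at this ⊢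
  tauto

lemma ite_mem_dualFam_gFam_sub (hFi : IsIntersecting F) (hA : A ∈ F) (hAg : A ⊆ groundN n)
    (hXg : X ⊆ groundN n) :
    ((if X ∈ dualFam (gFam n F A) then 1 else 0) -
        if X ∆ {Fin.last n} ∈ dualFam (gFam n F A) then 1 else 0 : ℝ) =
      (if X = A then 1 else 0) + if X = groundN n \ A then 1 else 0 := by
  have hgA : groundN n \ A ∉ F := fun h => by simpa using hFi A hA _ h
  simp only [mem_dualFam, compl_symmDiff_last hXg, compl_mem_gFam_iff hAg hXg,
    sdiff_mem_gFam_iff hAg]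
  by_cases hXA : X = A
  · subst hXA
    have : X ≠ groundN n \ X := fun h => hgA (h ▸ hA)
    simp [hgA, this]
  · by_cases hX : X = groundN n \ A
    · have : groundN n \ X = A := by rw [hX, Finset.sdiff_sdiff_eq_self hAg]
      rw [if_pos hX, if_neg hXA, this]
      simp [hA]
    · have : groundN n \ X ≠ A := fun h => hX (by rw [← h, Finset.sdiff_sdiff_eq_self hXg])
      simp [hXA, hX, this]

lemma LamW_dualFam_gFam (hFi : IsIntersecting F) (hA : A ∈ F) (hAg : A ⊆ groundN n)
    {D : Finset (Fin (n + 1))} (hDg : D ⊆ groundN n) :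
    LamW (dualFam (gFam n F A)) D (insert (Fin.last n) D) =
      2 * ((#(D ∆ A))! * (n - #(D ∆ A))! : ℕ) := by
  set z := Fin.last n
  have hzD : z ∉ D := fun h => last_notMem_groundN n (hDg h)
  have hDAg : D ∆ A ⊆ groundN n := symmDiff_subset_union.trans (union_subset hDg hAg)
  have per_perm : ∀ σ : Perm (Fin (n + 1)),
      ((if D ∆ before σ z ∈ dualFam (gFam n F A) then 1 else 0) -
        if D ∆ {z} ∆ before σ z ∈ dualFam (gFam n F A) then 1 else 0 : ℝ) =
      (if before σ z = D ∆ A then 1 else 0) +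
        if before σ z = groundN n \ (D ∆ A) then 1 else 0 := by
    intro σ
    have hXg : D ∆ before σ z ⊆ groundN n := symmDiff_subset_union.trans <|
      union_subset hDg (by simpa [groundN_eq_compl] using notMem_before_self σ z)
    rw [symmDiff_right_comm D {z}, ite_mem_dualFam_gFam_sub hFi hA hAg hXg,
      ← symmDiff_sdiff_eq_sdiff_symmDiff hDg]
    simp_rw [← symmDiff_right_inj (a := D) (b := before σ z), symmDiff_symmDiff_cancel_left]
  have hins : insert z D = D ∆ {z} := by
    rw [symmDiff_eq_union (disjoint_singleton_right.2 hzD), union_comm, ← insert_eq]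
  rw [hins, LamW_symmDiff_singleton, sum_congr rfl fun σ _ => per_perm σ, sum_add_distrib,
    sum_boole, sum_boole, card_filter_before_eq fun h => last_notMem_groundN n (hDAg h),
    card_filter_before_eq fun h => last_notMem_groundN n (mem_sdiff.1 h).1,
    card_sdiff_of_subset hDAg, card_groundN, Nat.add_sub_cancel,
    Nat.sub_sub_self ((card_le_card hDAg).trans_eq (card_groundN n))]
  push_cast
  ring

end GFam

theorem not_emptyMinimal_general (n : ℕ)
    (F : Finset (Finset (Fin (n + 1))))
    (hFsub : ∀ B ∈ F, B ⊆ groundN n)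
    (hFi : IsIntersecting F)
    (hFmax : ∀ G : Finset (Finset (Fin (n + 1))),
      (∀ B ∈ G, B ⊆ groundN n) → IsIntersecting G → F ⊆ G → G ⊆ F)
    (A : Finset (Fin (n + 1))) (hA : A ∈ F) (hAmin : ∀ B ⊂ A, B ∉ F)
    (hcard : ({A.card, n - A.card} : Finset ℕ) ≠ ({n / 2, (n + 1) / 2} : Finset ℕ)) :
    IsMaxIntersecting (gFam n F A) ∧ ¬ EmptyMinimal (gFam n F A) := by
  have hAg : A ⊆ groundN n := hFsub A hA
  have complete := fun S => mem_or_sdiff_mem_of_maximal hFsub hFi hFmax ⟨A, hA⟩ (S := S)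
  refine ⟨(isIntersecting_gFam hFi hAg hAmin).isMaxIntersecting (mem_or_compl_mem_gFam complete),
    fun hmin => ?_⟩
  obtain ⟨W, hWg, hW⟩ : ∃ W ⊆ groundN n, #W = n / 2 :=
    exists_subset_card_eq (by rw [card_groundN]; omega)
  have hDg : A ∆ W ⊆ groundN n := symmDiff_subset_union.trans (union_subset hAg hWg)
  have hle := hmin (Fin.last n) (A ∆ W) fun h => last_notMem_groundN n (hDg h)
  rw [← insert_empty, LamW_dualFam_gFam hFi hA hAg (empty_subset _),
    LamW_dualFam_gFam hFi hA hAg hDg, symmDiff_comm A W,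
    symmDiff_symmDiff_cancel_right, ← bot_eq_empty, bot_symmDiff, hW,
    show n - n / 2 = (n + 1) / 2 by omega] at hle
  have hlt := factorial_mul_factorial_sub_half_lt ((card_le_card hAg).trans_eq (card_groundN n))
    (fun h => hcard (by rw [h, show n - n / 2 = (n + 1) / 2 by omega]))
    (fun h => hcard (by rw [h, show n - (n + 1) / 2 = n / 2 by omega, pair_comm]))
  exact hle.not_gt (by exact_mod_cast Nat.mul_lt_mul_of_pos_left hlt two_pos)

/-- Given a maximal intersecting subfamily `F` of `P([n])` and a minimal set `A ∈ F` whose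
size pair `{|A|, n - |A|}` differs from `{⌊n/2⌋, ⌈n/2⌉}`, the family
`G = ({B ⊆ [n+1] : B ∩ [n] ∈ F} \ {A}) ∪ {[n+1] \ A}` is a maximal intersecting subfamily
of `P([n+1])` that is not `∅`-minimal. -/
theorem not_emptyMinimal (n : ℕ) (hn : 1 ≤ n)
    (F : Finset (Finset (Fin (n + 1))))
    (hFsub : ∀ B ∈ F, B ⊆ groundN n)
    (hFi : IsIntersecting F)
    (hFmax : ∀ G : Finset (Finset (Fin (n + 1))),
      (∀ B ∈ G, B ⊆ groundN n) → IsIntersecting G → F ⊆ G → G ⊆ F)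
    (A : Finset (Fin (n + 1))) (hA : A ∈ F) (hAmin : ∀ B ⊂ A, B ∉ F)
    (hcard : ({A.card, n - A.card} : Finset ℕ) ≠ ({n / 2, (n + 1) / 2} : Finset ℕ)) :
    IsMaxIntersecting (gFam n F A) ∧ ¬ EmptyMinimal (gFam n F A) :=
  not_emptyMinimal_general n F hFsub hFi hFmax A hA hAmin hcard
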